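/- arXiv:1102.4308 — 3 statements merged into one kernel-verified Lean document; each statement's English description precedes it below -/
import Mathlib

section
/- For every smooth compactly supported function f on (0, ∞), one has ∫₀^∞ (H f)(y)·f(y)· y dy = ∫₀^∞ Z(y)² · |(f/Z)'(y)|² · y dy, where Z(y) = 2y/(1+y²) and H f = −f'' − f'/y + V f with V(y) = (y⁴ − 6y² + 1)/(y²(1+y²)²). In particular, H is a nonnegative operator on compactly supported smooth functions on (0,∞). -/
open MeasureTheory Set

/-- The key algebraic identity behind the ground-state factorization. -/
lemma key_algebra (y gy dgy ddgy : ℝ) (hy : y ≠ 0) :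
    (-(((4 * y ^ 3 - 12 * y) / (1 + y ^ 2) ^ 3 * gy +
          (2 - 2 * y ^ 2) / (1 + y ^ 2) ^ 2 * dgy) +
        ((2 - 2 * y ^ 2) / (1 + y ^ 2) ^ 2 * dgy + 2 * y / (1 + y ^ 2) * ddgy)) -
      ((2 - 2 * y ^ 2) / (1 + y ^ 2) ^ 2 * gy + 2 * y / (1 + y ^ 2) * dgy) / y +
      (y ^ 4 - 6 * y ^ 2 + 1) / (y ^ 2 * (1 + y ^ 2) ^ 2) * (2 * y / (1 + y ^ 2) * gy)) *
      (2 * y / (1 + y ^ 2) * gy) * y =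
    (2 * y / (1 + y ^ 2)) ^ 2 * dgy ^ 2 * y +
      -((2 * y / (1 + y ^ 2)) ^ 2 * dgy * gy +
          y * (2 * (2 * y / (1 + y ^ 2)) * ((2 - 2 * y ^ 2) / (1 + y ^ 2) ^ 2)) * dgy * gy +
          y * (2 * y / (1 + y ^ 2)) ^ 2 * ddgy * gy +
          y * (2 * y / (1 + y ^ 2)) ^ 2 * dgy ^ 2) := by
  have h : (1 : ℝ) + y ^ 2 ≠ 0 := by positivity
  field_simp
  ring

/-- Ground-state factorization of the quadratic form of the linearized operator `H`:
for smooth compactly supported `f` on `(0,∞)`,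
`∫ (H f) f y dy = ∫ Z² ((f/Z)')² y dy`, and in particular the form is nonnegative. -/
theorem quadratic_form_factorization
    (Z : ℝ → ℝ) (hZ : Z = fun y => 2 * y / (1 + y ^ 2))
    (V : ℝ → ℝ) (hV : V = fun y => (y ^ 4 - 6 * y ^ 2 + 1) / (y ^ 2 * (1 + y ^ 2) ^ 2))
    (H : (ℝ → ℝ) → (ℝ → ℝ))
    (hH : ∀ f : ℝ → ℝ, H f = fun y => -(deriv (deriv f) y) - deriv f y / y + V y * f y)
    (f : ℝ → ℝ) (hf : ContDiff ℝ (⊤ : ℕ∞) f) (hsupp : HasCompactSupport f)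
    (hpos : tsupport f ⊆ Ioi (0 : ℝ)) :
    (∫ y in Ioi (0 : ℝ), H f y * f y * y) =
      ∫ y in Ioi (0 : ℝ), (Z y) ^ 2 * (deriv (fun z => f z / Z z) y) ^ 2 * y ∧
    0 ≤ ∫ y in Ioi (0 : ℝ), H f y * f y * y := by
  have hf' : ContDiff ℝ ((⊤ : ℕ∞) : WithTop ℕ∞) f := hf.of_le (by simp)
  have hden : ∀ y : ℝ, (1 : ℝ) + y ^ 2 ≠ 0 := fun y => by positivity
  have hf0 : ∀ y : ℝ, y ∉ tsupport f → f y = 0 := fun y hy =>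
    image_eq_zero_of_notMem_tsupport hy
  have h0nt : (0 : ℝ) ∉ tsupport f := fun h => lt_irrefl 0 (mem_Ioi.mp (hpos h))
  have hZne : ∀ y : ℝ, y ≠ 0 → 2 * y / (1 + y ^ 2) ≠ 0 := by
    intro y hy
    exact div_ne_zero (by simpa using hy) (hden y)
  set g : ℝ → ℝ := fun z => f z / (2 * z / (1 + z ^ 2)) with hgdef
  -- the function in the statement is `g`
  have hZg : (fun z => f z / Z z) = g := by
    funext z; simp only [hZ, hgdef]
  -- f = Z * g pointwise
  have hfg : ∀ y : ℝ, f y = 2 * y / (1 + y ^ 2) * g y := by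
    intro y
    rcases eq_or_ne y 0 with rfl | hy
    · simp [hgdef, hf0 0 h0nt]
    · rw [hgdef]
      rw [mul_comm, div_mul_cancel₀ _ (hZne y hy)]
  -- smoothness of Z
  have hZfc : ContDiff ℝ ((⊤ : ℕ∞) : WithTop ℕ∞) (fun y : ℝ => 2 * y / (1 + y ^ 2)) := by
    apply ContDiff.div
    · fun_prop
    · fun_prop
    · exact hden
  -- smoothness of g
  have hg : ContDiff ℝ ((⊤ : ℕ∞) : WithTop ℕ∞) g := by
    rw [contDiff_iff_contDiffAt]
    intro x
    rcases eq_or_ne x 0 with rfl | hx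
    · have hopen : IsOpen (tsupport f)ᶜ := (isClosed_tsupport f).isOpen_compl
      have heq : g =ᶠ[nhds (0 : ℝ)] (fun _ => (0 : ℝ)) := by
        filter_upwards [hopen.mem_nhds h0nt] with y hy
        simp [hgdef, hf0 y hy]
      exact (contDiffAt_const (c := (0 : ℝ))).congr_of_eventuallyEq heq
    · exact (hf'.contDiffAt).div hZfc.contDiffAt (hZne x hx)
  have hgdiff : Differentiable ℝ g := hg.differentiable (by simp)
  have hdgC : ContDiff ℝ ((⊤ : ℕ∞) : WithTop ℕ∞) (deriv g) :=
    (contDiff_infty_iff_deriv.mp hg).2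
  have hddgC : ContDiff ℝ ((⊤ : ℕ∞) : WithTop ℕ∞) (deriv (deriv g)) :=
    (contDiff_infty_iff_deriv.mp hdgC).2
  have hgd : ∀ y, HasDerivAt g (deriv g y) y := fun y => (hgdiff y).hasDerivAt
  have hdgd : ∀ y, HasDerivAt (deriv g) (deriv (deriv g) y) y := fun y =>
    ((hdgC.differentiable (by simp)) y).hasDerivAt
  -- derivatives of Z
  have hbase : ∀ y : ℝ, HasDerivAt (fun y : ℝ => 1 + y ^ 2) (2 * y) y := by
    intro y
    simpa using (hasDerivAt_pow 2 y).const_add 1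
  have hZd : ∀ y : ℝ,
      HasDerivAt (fun y : ℝ => 2 * y / (1 + y ^ 2)) ((2 - 2 * y ^ 2) / (1 + y ^ 2) ^ 2) y := by
    intro y
    have h1 : HasDerivAt (fun y : ℝ => 2 * y) 2 y := by
      simpa using (hasDerivAt_id y).const_mul 2
    have h := h1.div (hbase y) (hden y)
    refine h.congr_deriv ?_
    rw [div_eq_div_iff (by positivity) (by positivity)]
    ring
  have hZ1d : ∀ y : ℝ,
      HasDerivAt (fun y : ℝ => (2 - 2 * y ^ 2) / (1 + y ^ 2) ^ 2)
        ((4 * y ^ 3 - 12 * y) / (1 + y ^ 2) ^ 3) y := by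
    intro y
    have h1 : HasDerivAt (fun y : ℝ => 2 - 2 * y ^ 2) (-(4 * y)) y := by
      have := ((hasDerivAt_pow 2 y).const_mul 2).const_sub 2
      refine this.congr_deriv ?_
      push_cast
      ring
    have h2 : HasDerivAt (fun y : ℝ => (1 + y ^ 2) ^ 2) (2 * (1 + y ^ 2) * (2 * y)) y := by
      have := (hbase y).pow 2
      refine this.congr_deriv ?_
      push_cast
      ring
    have h := h1.div h2 (by positivity)
    refine h.congr_deriv ?_
    rw [div_eq_div_iff (by positivity) (by positivity)]
    ring
  -- first and second derivatives of f
  have hdf : deriv f = fun y =>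
      (2 - 2 * y ^ 2) / (1 + y ^ 2) ^ 2 * g y + 2 * y / (1 + y ^ 2) * deriv g y := by
    funext y
    have hfeq : f = fun y => 2 * y / (1 + y ^ 2) * g y := funext hfg
    rw [hfeq]
    exact ((hZd y).mul (hgd y)).deriv
  have hddf : ∀ y : ℝ, deriv (deriv f) y =
      ((4 * y ^ 3 - 12 * y) / (1 + y ^ 2) ^ 3 * g y +
        (2 - 2 * y ^ 2) / (1 + y ^ 2) ^ 2 * deriv g y) +
      ((2 - 2 * y ^ 2) / (1 + y ^ 2) ^ 2 * deriv g y +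
        2 * y / (1 + y ^ 2) * deriv (deriv g) y) := by
    intro y
    rw [hdf]
    exact (((hZ1d y).mul (hgd y)).add ((hZd y).mul (hdgd y))).deriv
  -- the two integrand pieces
  set A : ℝ → ℝ := fun y => (2 * y / (1 + y ^ 2)) ^ 2 * (deriv g y) ^ 2 * y with hAdef
  set E : ℝ → ℝ := fun y =>
    -((2 * y / (1 + y ^ 2)) ^ 2 * deriv g y * g y +
        y * (2 * (2 * y / (1 + y ^ 2)) * ((2 - 2 * y ^ 2) / (1 + y ^ 2) ^ 2)) * deriv g y * g y +
        y * (2 * y / (1 + y ^ 2)) ^ 2 * deriv (deriv g) y * g y +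
        y * (2 * y / (1 + y ^ 2)) ^ 2 * (deriv g y) ^ 2) with hEdef
  set Fn : ℝ → ℝ := fun y => -(y * (2 * y / (1 + y ^ 2)) ^ 2 * deriv g y * g y) with hFdef
  -- pointwise identity on (0,∞)
  have key1 : ∀ y ∈ Ioi (0 : ℝ), H f y * f y * y = A y + E y := by
    intro y hy
    have hy0 : y ≠ 0 := ne_of_gt hy
    simp only [hH, hV, hAdef, hEdef]
    rw [hddf y, hdf, hfg y]
    exact key_algebra y (g y) (deriv g y) (deriv (deriv g) y) hy0
  -- Fn has derivative E
  have hFd : ∀ y : ℝ, HasDerivAt Fn (E y) y := by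
    intro y
    have h := ((((hasDerivAt_id y).mul ((hZd y).pow 2)).mul (hdgd y)).mul (hgd y)).neg
    refine h.congr_deriv ?_
    simp only [hEdef, id_eq, Pi.mul_apply, Pi.pow_apply]
    push_cast
    ring
  -- vanishing outside the support of f
  have hsuppg : tsupport g ⊆ tsupport f := by
    apply closure_mono
    intro x hx
    by_contra h
    have : f x = 0 := Function.notMem_support.mp h
    exact hx (by simp [hgdef, this])
  have hg0 : ∀ x ∉ tsupport f, g x = 0 := by
    intro x hx
    by_contra h
    exact hx (hsuppg (subset_closure h))
  have hdg0 : ∀ x ∉ tsupport f, deriv g x = 0 := by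
    intro x hx
    by_contra h
    exact hx (hsuppg (support_deriv_subset h))
  have hEvan : ∀ x ∉ tsupport f, E x = 0 := by
    intro x hx
    simp [hEdef, hg0 x hx, hdg0 x hx]
  have hFvan : ∀ x ∉ tsupport f, Fn x = 0 := by
    intro x hx
    simp [hFdef, hg0 x hx]
  have hAvan : ∀ x ∉ tsupport f, A x = 0 := by
    intro x hx
    simp [hAdef, hdg0 x hx]
  -- a compact interval enclosing the support
  set K : Set ℝ := insert (1 : ℝ) (tsupport f) with hKdef
  have hK : IsCompact K := hsupp.insert 1
  have hKpos : K ⊆ Ioi (0 : ℝ) := insert_subset (by norm_num) hpos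
  have hKne : K.Nonempty := ⟨1, mem_insert _ _⟩
  set a : ℝ := sInf K / 2 with hadef
  set b : ℝ := sSup K + 1 with hbdef
  have hsInfK : 0 < sInf K := hKpos (hK.sInf_mem hKne)
  have hKsub : K ⊆ Ioo a b := by
    intro x hx
    constructor
    · calc a < sInf K := by rw [hadef]; linarith
        _ ≤ x := csInf_le hK.bddBelow hx
    · calc x ≤ sSup K := le_csSup hK.bddAbove hx
        _ < b := by rw [hbdef]; linarith
  have hab : a < b := by
    have h1 := hKsub (hK.sInf_mem hKne)
    exact lt_trans h1.1 h1.2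
  have hant : a ∉ tsupport f := by
    intro h
    exact lt_irrefl a (hKsub (mem_insert_of_mem _ h)).1
  have hbnt : b ∉ tsupport f := by
    intro h
    exact lt_irrefl b (hKsub (mem_insert_of_mem _ h)).2
  -- continuity facts
  have c1 : Continuous fun y : ℝ => 2 * y / (1 + y ^ 2) := hZfc.continuous
  have c2 : Continuous fun y : ℝ => (2 - 2 * y ^ 2) / (1 + y ^ 2) ^ 2 := by
    apply Continuous.div
    · fun_prop
    · fun_prop
    · intro y; positivity
  have cg : Continuous g := hg.continuous
  have cdg : Continuous (deriv g) := hdgC.continuous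
  have cddg : Continuous (deriv (deriv g)) := hddgC.continuous
  have hAcont : Continuous A := ((c1.pow 2).mul (cdg.pow 2)).mul continuous_id
  have hEcont : Continuous E := by
    refine Continuous.neg ?_
    refine Continuous.add (Continuous.add (Continuous.add ?_ ?_) ?_) ?_
    · exact ((c1.pow 2).mul cdg).mul cg
    · exact ((continuous_id.mul ((continuous_const.mul c1).mul c2)).mul cdg).mul cg
    · exact ((continuous_id.mul (c1.pow 2)).mul cddg).mul cg
    · exact (continuous_id.mul (c1.pow 2)).mul (cdg.pow 2)
  have hAsupp : HasCompactSupport A :=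
    HasCompactSupport.intro hK fun x hx => hAvan x fun h => hx (mem_insert_of_mem _ h)
  have hEsupp : HasCompactSupport E :=
    HasCompactSupport.intro hK fun x hx => hEvan x fun h => hx (mem_insert_of_mem _ h)
  have hAint : IntegrableOn A (Ioi (0 : ℝ)) :=
    (hAcont.integrable_of_hasCompactSupport hAsupp).integrableOn
  have hEint : IntegrableOn E (Ioi (0 : ℝ)) :=
    (hEcont.integrable_of_hasCompactSupport hEsupp).integrableOn
  -- the integral of E vanishes
  have hEzero : (∫ y in Ioi (0 : ℝ), E y) = 0 := by
    have e1 : (∫ y in Ioi (0 : ℝ), E y) = ∫ y, E y :=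
      setIntegral_eq_integral_of_forall_compl_eq_zero fun x hx =>
        hEvan x fun h => hx (hpos h)
    have e2 : (∫ y in Ioc a b, E y) = ∫ y, E y :=
      setIntegral_eq_integral_of_forall_compl_eq_zero fun x hx =>
        hEvan x fun h => hx (Ioo_subset_Ioc_self (hKsub (mem_insert_of_mem _ h)))
    have e3 : (∫ y in a..b, E y) = ∫ y in Ioc a b, E y :=
      intervalIntegral.integral_of_le hab.le
    have e4 : (∫ y in a..b, E y) = Fn b - Fn a :=
      intervalIntegral.integral_eq_sub_of_hasDerivAt (fun x _ => hFd x)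
        (hEcont.intervalIntegrable a b)
    rw [e1, ← e2, ← e3, e4, hFvan a hant, hFvan b hbnt, sub_zero]
  -- nonnegativity of the A-integral
  have hAnn : 0 ≤ ∫ y in Ioi (0 : ℝ), A y := by
    apply setIntegral_nonneg measurableSet_Ioi
    intro y hy
    have hy0 : 0 < y := hy
    simp only [hAdef]
    positivity
  -- assemble
  have h1 : (∫ y in Ioi (0 : ℝ), H f y * f y * y) = ∫ y in Ioi (0 : ℝ), (A y + E y) :=
    setIntegral_congr_fun measurableSet_Ioi key1
  have h2 : (∫ y in Ioi (0 : ℝ), (Z y) ^ 2 * (deriv (fun z => f z / Z z) y) ^ 2 * y) =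
      ∫ y in Ioi (0 : ℝ), A y := by
    apply setIntegral_congr_fun measurableSet_Ioi
    intro y _
    rw [hZg]
    simp only [hZ, hAdef]
  have h3 : (∫ y in Ioi (0 : ℝ), H f y * f y * y) = ∫ y in Ioi (0 : ℝ), A y := by
    rw [h1, integral_add hAint hEint, hEzero, add_zero]
  exact ⟨by rw [h3, h2], by rw [h3]; exact hAnn⟩
end

section
/- Let f : (0, ∞) → ℝ be continuously differentiable with f(r) → 0 as r → 0 and f(r) → π as r → ∞, and such that ∫₀^∞ ((f')² + sin²f/r²) r dr < ∞. Then ∫₀^∞ ((f'(r))² + sin²(f(r))/r²) · r dr ≥ 4. -/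
/-!
Since `(f' - sin f / r)² ≥ 0`, the energy density `(f'² + sin² f / r²) r` dominates
`2 f' sin f = (-2 cos f)'`. Integrating over `(0, ∞)`, the energy is at least
`[-2 cos f]₀^∞ = 2 - (-2) = 4`.
-/

open MeasureTheory Set Filter Topology Real

lemma abs_two_mul_mul_le_add_sq_div_sq_mul {a b r : ℝ} (hr : 0 < r) :
    |2 * a * b| ≤ (a ^ 2 + b ^ 2 / r ^ 2) * r := by
  have hsplit : (a ^ 2 + b ^ 2 / r ^ 2) * r = a ^ 2 * r + b ^ 2 / r := by
    field_simp
  have hplus : 0 ≤ (a * r + b) ^ 2 / r := by positivity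
  have hminus : 0 ≤ (a * r - b) ^ 2 / r := by positivity
  have hplus' : (a * r + b) ^ 2 / r = a ^ 2 * r + b ^ 2 / r + 2 * a * b := by
    field_simp; ring
  have hminus' : (a * r - b) ^ 2 / r = a ^ 2 * r + b ^ 2 / r - 2 * a * b := by
    field_simp; ring
  rw [hsplit, abs_le]
  constructor <;> linarith

theorem integral_Ioi_of_hasDerivAt_of_tendsto_nhdsGT {F G : ℝ → ℝ} {a l m : ℝ}
    (hderiv : ∀ x ∈ Ioi a, HasDerivAt F (G x) x) (hG : IntegrableOn G (Ioi a))
    (h_zero : Tendsto F (𝓝[>] a) (𝓝 l)) (h_infty : Tendsto F atTop (𝓝 m)) :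
    ∫ x in Ioi a, G x = m - l := by
  rw [← Ici_sdiff_left] at h_zero
  have hderiv' : ∀ x ∈ Ioi a, HasDerivAt (Function.update F a l) (G x) x := by
    intro x (hx : a < x)
    apply (hderiv x hx).congr_of_eventuallyEq
    filter_upwards [eventually_ne_nhds hx.ne'] with y hy
    exact Function.update_of_ne hy l F
  have h_infty' : Tendsto (Function.update F a l) atTop (𝓝 m) := by
    apply h_infty.congr'
    filter_upwards [eventually_ne_atTop a] with x hx
    exact (Function.update_of_ne hx l F).symm
  simpa using integral_Ioi_of_hasDerivAt_of_tendsto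
    (continuousWithinAt_update_same.mpr h_zero) hderiv' hG h_infty'

theorem sub_le_integral_Ioi_of_hasDerivAt_of_abs_le {F G E : ℝ → ℝ} {a l m : ℝ}
    (hderiv : ∀ x ∈ Ioi a, HasDerivAt F (G x) x) (hGE : ∀ x ∈ Ioi a, |G x| ≤ E x)
    (hE : IntegrableOn E (Ioi a)) (h_zero : Tendsto F (𝓝[>] a) (𝓝 l))
    (h_infty : Tendsto F atTop (𝓝 m)) :
    m - l ≤ ∫ x in Ioi a, E x := by
  -- `G` is measurable because it agrees with the measurable function `deriv F` on `(a, ∞)`.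
  have hGmeas : AEStronglyMeasurable G (volume.restrict (Ioi a)) := by
    refine (measurable_deriv F).aestronglyMeasurable.congr ?_
    filter_upwards [ae_restrict_mem measurableSet_Ioi] with x hx using (hderiv x hx).deriv
  have hG : IntegrableOn G (Ioi a) := by
    refine hE.mono' hGmeas ?_
    filter_upwards [ae_restrict_mem measurableSet_Ioi] with x hx using hGE x hx
  rw [← integral_Ioi_of_hasDerivAt_of_tendsto_nhdsGT hderiv hG h_zero h_infty]
  exact setIntegral_mono_on hG hE measurableSet_Ioi fun x hx => (le_abs_self _).trans (hGE x hx)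

/-- Bogomolny-type lower bound: a `C¹` map angle joining the two poles has reduced
Dirichlet energy at least `4`. -/
theorem bogomolny_lower_bound (f : ℝ → ℝ)
    (hf : ContDiffOn ℝ 1 f (Ioi (0 : ℝ)))
    (h0 : Tendsto f (nhdsWithin 0 (Ioi 0)) (nhds 0))
    (hinf : Tendsto f atTop (nhds Real.pi))
    (hint : IntegrableOn (fun r => ((deriv f r) ^ 2 + Real.sin (f r) ^ 2 / r ^ 2) * r)
      (Ioi (0 : ℝ))) :
    4 ≤ ∫ r in Ioi (0 : ℝ), ((deriv f r) ^ 2 + Real.sin (f r) ^ 2 / r ^ 2) * r := by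
  have hderiv : ∀ r ∈ Ioi (0 : ℝ),
      HasDerivAt (fun r => -2 * cos (f r)) (2 * deriv f r * sin (f r)) r := by
    intro r hr
    have hfr := ((hf.differentiableOn one_ne_zero).differentiableAt (Ioi_mem_nhds hr)).hasDerivAt
    exact (hfr.cos.const_mul (-2)).congr_deriv (by ring)
  have h_zero : Tendsto (fun r => -2 * cos (f r)) (𝓝[>] 0) (𝓝 (-2)) := by
    simpa using ((continuous_cos.tendsto 0).comp h0).const_mul (-2)
  have h_infty : Tendsto (fun r => -2 * cos (f r)) atTop (𝓝 2) := by
    simpa using ((continuous_cos.tendsto π).comp hinf).const_mul (-2)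
  have hbound := sub_le_integral_Ioi_of_hasDerivAt_of_abs_le hderiv
    (fun r hr => abs_two_mul_mul_le_add_sq_div_sq_mul hr) hint h_zero h_infty
  linarith
end

section
/- Let b : [s₀, ∞) → (0, e⁻¹) be a C¹ solution of b' = −b²·(1 + 1/(2·log(1/b))). Then b is decreasing, b(s) → 0 as s → ∞, and s·b(s) → 1 as s → ∞. -/
/-!
With `g = 1/b` the equation becomes `g' = 1 + 1/(2 log g)`. Since `b < e⁻¹` the right-hand side is
at least `1`, so `g` grows at least linearly and `b → 0`; then `log g → ∞`, so `g' → 1`, and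
`g(s)/s → 1` because a function whose derivative tends to `L` grows like `L s`.
-/

open Set Filter Topology Asymptotics

lemma strictAntiOn_Ici_of_hasDerivAt_neg {f f' : ℝ → ℝ} {a : ℝ}
    (hf : ∀ x ∈ Ici a, HasDerivAt f (f' x) x) (hf' : ∀ x ∈ Ici a, f' x < 0) :
    StrictAntiOn f (Ici a) :=
  strictAntiOn_of_hasDerivWithinAt_neg (convex_Ici a)
    (fun x hx => (hf x hx).continuousAt.continuousWithinAt)
    (fun x hx => (hf x (interior_subset hx)).hasDerivWithinAt)
    (fun x hx => hf' x (interior_subset hx))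

lemma add_mul_sub_le_of_le_hasDerivAt {f f' : ℝ → ℝ} {a m : ℝ}
    (hf : ∀ x ∈ Ici a, HasDerivAt f (f' x) x) (hf' : ∀ x ∈ Ici a, m ≤ f' x) {x : ℝ}
    (hx : a ≤ x) : f a + m * (x - a) ≤ f x := by
  have hg : ∀ x ∈ Ici a, HasDerivAt (fun x => f x - m * x) (f' x - m) x := fun x hx =>
    (hf x hx).fun_sub (hasDerivAt_const_mul m)
  have hmono : MonotoneOn (fun x => f x - m * x) (Ici a) :=
    monotoneOn_of_hasDerivWithinAt_nonneg (convex_Ici a)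
      (fun x hx => (hg x hx).continuousAt.continuousWithinAt)
      (fun x hx => (hg x (interior_subset hx)).hasDerivWithinAt)
      (fun x hx => sub_nonneg.2 (hf' x (interior_subset hx)))
  have := hmono self_mem_Ici hx hx
  simp only at this
  linarith

lemma tendsto_atTop_of_le_hasDerivAt {f f' : ℝ → ℝ} {a m : ℝ} (hm : 0 < m)
    (hf : ∀ x ∈ Ici a, HasDerivAt f (f' x) x) (hf' : ∀ x ∈ Ici a, m ≤ f' x) :
    Tendsto f atTop atTop := by
  have hlin : Tendsto (fun x => f a + m * (x - a)) atTop atTop :=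
    tendsto_atTop_add_const_left _ _
      ((tendsto_atTop_add_const_right _ _ tendsto_id).const_mul_atTop hm)
  exact tendsto_atTop_mono' _ ((eventually_ge_atTop a).mono fun x hx =>
    add_mul_sub_le_of_le_hasDerivAt hf hf' hx) hlin

lemma isLittleO_id_of_hasDerivAt_tendsto_zero {f f' : ℝ → ℝ}
    (hf : ∀ᶠ x in atTop, HasDerivAt f (f' x) x) (hf' : Tendsto f' atTop (𝓝 0)) :
    f =o[atTop] id := by
  refine isLittleO_iff.2 fun ε hε => ?_
  obtain ⟨a, ha⟩ := eventually_atTop.1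
    (hf.and (hf'.eventually (Metric.closedBall_mem_nhds 0 (half_pos hε))))
  have hlip : ∀ x ≥ a, ‖f x - f a‖ ≤ ε / 2 * ‖x - a‖ := fun x hx =>
    Convex.norm_image_sub_le_of_norm_hasDerivWithin_le
      (fun y hy => (ha y hy).1.hasDerivWithinAt)
      (fun y hy => by simpa using (ha y hy).2) (convex_Ici a) self_mem_Ici hx
  filter_upwards [eventually_ge_atTop a, eventually_ge_atTop (0 : ℝ),
    eventually_ge_atTop (2 * (|f a| + ε / 2 * |a|) / ε)] with x hxa hx0 hxbig
  have hbig := (div_le_iff₀ hε).1 hxbig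
  have hstep : ε / 2 * |x - a| ≤ ε / 2 * (x + |a|) := by
    gcongr
    exact (abs_sub _ _).trans_eq (by rw [abs_of_nonneg hx0])
  have hfx := abs_sub_abs_le_abs_sub (f x) (f a)
  have hfa := hlip x hxa
  simp only [Real.norm_eq_abs, id, abs_of_nonneg hx0] at hfa ⊢
  linarith

lemma tendsto_div_atTop_of_hasDerivAt {f f' : ℝ → ℝ} {L : ℝ}
    (hf : ∀ᶠ x in atTop, HasDerivAt f (f' x) x) (hf' : Tendsto f' atTop (𝓝 L)) :
    Tendsto (fun x => f x / x) atTop (𝓝 L) := by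
  have hsub : (fun x => f x - L * x) =o[atTop] id :=
    isLittleO_id_of_hasDerivAt_tendsto_zero
      (hf.mono fun x hx => hx.fun_sub (hasDerivAt_const_mul L))
      (by simpa using hf'.sub_const L)
  have := hsub.tendsto_div_nhds_zero.add_const L
  rw [zero_add] at this
  refine this.congr' ((eventually_ne_atTop 0).mono fun x hx => ?_)
  simp only [id]
  rw [sub_div, mul_div_cancel_right₀ _ hx, sub_add_cancel]

lemma HasDerivAt.inv_of_eq_neg_sq_mul {b : ℝ → ℝ} {c s : ℝ}
    (h : HasDerivAt b (-(b s) ^ 2 * c) s) (hb : b s ≠ 0) :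
    HasDerivAt (fun t => (b t)⁻¹) c s := by
  have := h.inv hb
  rwa [neg_mul, neg_neg, mul_div_cancel_left₀ _ (pow_ne_zero 2 hb)] at this

lemma Real.one_lt_log_one_div {x : ℝ} (hx0 : 0 < x) (hx : x < Real.exp (-1)) :
    1 < Real.log (1 / x) := by
  rw [one_div, Real.log_inv, lt_neg]
  exact (Real.log_lt_log hx0 hx).trans_eq (Real.log_exp _)

lemma tendsto_one_add_one_div_two_mul_log_atTop :
    Tendsto (fun y => 1 + 1 / (2 * Real.log y)) atTop (𝓝 1) := by
  simpa only [one_div, add_zero, Pi.inv_apply] using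
    ((Real.tendsto_log_atTop.const_mul_atTop two_pos).inv_tendsto_atTop).const_add 1

/-- The logarithmically corrected modulation equation
`b' = -b²(1 + 1/(2 log(1/b)))`: `b` is decreasing, tends to `0`, and `s·b(s) → 1`. -/
theorem log_corrected_modulation (s₀ : ℝ) (b : ℝ → ℝ)
    (hrange : ∀ s ∈ Ici s₀, 0 < b s ∧ b s < Real.exp (-1))
    (hb : ∀ s ∈ Ici s₀,
      HasDerivAt b (-(b s) ^ 2 * (1 + 1 / (2 * Real.log (1 / b s)))) s) :
    StrictAntiOn b (Ici s₀) ∧ Tendsto b atTop (nhds 0) ∧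
      Tendsto (fun s => s * b s) atTop (nhds 1) := by
  have hrate : ∀ s ∈ Ici s₀, 1 ≤ 1 + 1 / (2 * Real.log (1 / b s)) := fun s hs => by
    have := Real.one_lt_log_one_div (hrange s hs).1 (hrange s hs).2
    have : 0 < 1 / (2 * Real.log (1 / b s)) := by positivity
    linarith
  have hinv : ∀ s ∈ Ici s₀,
      HasDerivAt (fun t => (b t)⁻¹) (1 + 1 / (2 * Real.log (1 / b s))) s := fun s hs =>
    (hb s hs).inv_of_eq_neg_sq_mul (hrange s hs).1.ne'
  have hinv_top : Tendsto (fun s => (b s)⁻¹) atTop atTop :=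
    tendsto_atTop_of_le_hasDerivAt one_pos hinv hrate
  refine ⟨strictAntiOn_Ici_of_hasDerivAt_neg hb fun s hs => ?_, ?_, ?_⟩
  · exact mul_neg_of_neg_of_pos (neg_neg_of_pos (pow_pos (hrange s hs).1 2))
      (one_pos.trans_le (hrate s hs))
  · exact hinv_top.inv_tendsto_atTop.congr fun s => inv_inv (b s)
  · have hrate_lim : Tendsto (fun s => 1 + 1 / (2 * Real.log (1 / b s))) atTop (𝓝 1) := by
      refine (tendsto_one_add_one_div_two_mul_log_atTop.comp hinv_top).congr fun s => ?_
      simp only [Function.comp_apply, one_div]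
    have := (tendsto_div_atTop_of_hasDerivAt (eventually_atTop.2 ⟨s₀, hinv⟩)
      hrate_lim).inv₀ one_ne_zero
    simpa [inv_one, inv_div, div_eq_mul_inv] using this
end
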